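/- (Two-sided regulator.) Fix a < b in ℝ and let f : ℝ₊ → ℝ be continuous with f(0) ∈ [a,b]. There exists a unique pair of continuous functions (l, u) from ℝ₊ to ℝ such that (i) X(t) := f(t) + l(t) − u(t) ∈ [a,b] for all t ≥ 0; (ii) l(0) = u(0) = 0 and both l and u are non-decreasing; (iii) ∫₀^∞ 1_{X(t) > a} dl(t) = ∫₀^∞ 1_{X(t) < b} du(t) = 0. -/

import Mathlib

open MeasureTheory ProbabilityTheory Filter Set
open scoped NNReal ENNReal Topology

noncomputable section

/-- The space `ℝ̈ = (-∞,0⁻] ∪ [0⁺,+∞)`, the disjoint union of two half-lines.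
A point is encoded by the half-line it belongs to (`side = true` for the positive one)
and its distance `rad` to the origin. -/
structure Rddot where
  side : Bool
  rad : ℝ≥0

namespace Rddot

/-- The natural projection `π̈ : ℝ̈ → ℝ` (identifying `0⁺` and `0⁻` with `0`). -/
def val (x : Rddot) : ℝ := if x.side then (x.rad : ℝ) else -(x.rad : ℝ)

/-- An auxiliary `{0,1}`-valued marker of the side, used to define the metric
`d(x,y) = |x - y| + 1_{xy ≤ 0}` on `ℝ̈`. -/
def ind (x : Rddot) : ℝ := if x.side then 0 else 1

/-- `|x|`, the distance of `x ∈ ℝ̈` to the origin. -/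
def abs (x : Rddot) : ℝ := (x.rad : ℝ)

instance : MeasurableSpace Rddot := MeasurableSpace.comap (fun x => (x.side, x.rad)) inferInstance

lemma eq_of_val_ind {x y : Rddot} (hv : x.val = y.val) (hi : x.ind = y.ind) : x = y := by
  rcases x with ⟨bx, rx⟩
  rcases y with ⟨by', ry⟩
  cases bx <;> cases by' <;> simp_all [val, ind]

/-- The metric `d(x,y) = |x-y| + 1_{xy ≤ 0}` on `ℝ̈`: the distance between the real
projections, plus `1` if the two points lie on different half-lines. -/
noncomputable instance : MetricSpace Rddot where
  dist x y := |x.val - y.val| + |x.ind - y.ind|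
  dist_self x := by simp
  dist_comm x y := by simp [abs_sub_comm]
  dist_triangle x y z := by
    show |x.val - z.val| + |x.ind - z.ind| ≤
      (|x.val - y.val| + |x.ind - y.ind|) + (|y.val - z.val| + |y.ind - z.ind|)
    have h1 : |x.val - z.val| ≤ |x.val - y.val| + |y.val - z.val| := abs_sub_le _ _ _
    have h2 : |x.ind - z.ind| ≤ |x.ind - y.ind| + |y.ind - z.ind| := abs_sub_le _ _ _
    linarith
  eq_of_dist_eq_zero := by
    intro x y h
    have h' : |x.val - y.val| + |x.ind - y.ind| = 0 := h
    have h1 : |x.val - y.val| = 0 := by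
      have := abs_nonneg (x.val - y.val)
      have := abs_nonneg (x.ind - y.ind)
      linarith
    have h2 : |x.ind - y.ind| = 0 := by
      have := abs_nonneg (x.val - y.val)
      have := abs_nonneg (x.ind - y.ind)
      linarith
    exact eq_of_val_ind (sub_eq_zero.mp (abs_eq_zero.mp h1))
      (sub_eq_zero.mp (abs_eq_zero.mp h2))

end Rddot

/-- A path indexed by `ℝ≥0` is càdlàg: right-continuous with left limits. -/
def CadlagOn {E : Type*} [TopologicalSpace E] (f : ℝ≥0 → E) : Prop :=
  (∀ t : ℝ≥0, ContinuousWithinAt f (Set.Ici t) t) ∧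
  (∀ t : ℝ≥0, 0 < t → ∃ l : E, Filter.Tendsto f (nhdsWithin t (Set.Iio t)) (nhds l))

/-- The natural filtration of a process `X`: `σ(X_u, u ≤ t)`. -/
def natSigma {Ω E : Type*} [MeasurableSpace E] (X : ℝ≥0 → Ω → E) (t : ℝ≥0) :
    MeasurableSpace Ω :=
  ⨆ u ∈ Set.Iic t, MeasurableSpace.comap (X u) inferInstance

/-- `M` is a martingale with respect to the filtration generated by the process `X`. -/
def IsMartingaleNat {Ω E : Type*} [MeasurableSpace Ω] [MeasurableSpace E] (P : Measure Ω)
    (X : ℝ≥0 → Ω → E) (M : ℝ≥0 → Ω → ℝ) : Prop :=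
  (∀ t, Integrable (M t) P) ∧
  (∀ t, Measurable[natSigma X t] (M t)) ∧
  ∀ s t : ℝ≥0, s ≤ t → P[M t|natSigma X s] =ᵐ[P] M s

/-- `X` is a Markov process (with respect to its natural filtration). -/
def IsMarkovProc {Ω E : Type*} [MeasurableSpace Ω] [MeasurableSpace E] (P : Measure Ω)
    (X : ℝ≥0 → Ω → E) : Prop :=
  ∀ s t : ℝ≥0, s ≤ t → ∀ g : E → ℝ, Measurable g → (∀ x, |g x| ≤ 1) →
    P[(fun ω => g (X t ω))|natSigma X s]
      =ᵐ[P] P[(fun ω => g (X t ω))|MeasurableSpace.comap (X s) inferInstance]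

/-- The domain `𝒟^γ` of the generator of partially reflected Brownian motion with
permeability `γ ∈ [0,∞]`: functions on `ℝ̈` vanishing at infinity, twice continuously
differentiable on each half-line (`pos` and `neg` are the restrictions to `[0⁺,∞)` and
`(-∞,0⁻]`, the latter reparametrized by the distance to the origin), and satisfying the
transmission condition `f'(0⁻) = f'(0⁺) = γ (f(0⁺) - f(0⁻))` (for `γ = ∞` this means
`f'(0⁻) = f'(0⁺)` and `f(0⁺) = f(0⁻)`). -/
structure DomGamma (γ : ℝ≥0∞) where
  pos : ℝ → ℝ
  neg : ℝ → ℝ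
  contDiff_pos : ContDiffOn ℝ 2 pos (Set.Ici 0)
  contDiff_neg : ContDiffOn ℝ 2 neg (Set.Ici 0)
  vanish_pos : Filter.Tendsto pos Filter.atTop (nhds 0)
  vanish_neg : Filter.Tendsto neg Filter.atTop (nhds 0)
  /-- `f'(0⁻) = f'(0⁺)`; note that `f'(0⁻) = - neg'(0)` since `neg` is parametrized by
  the distance to the origin. -/
  deriv_eq : -(derivWithin neg (Set.Ici 0) 0) = derivWithin pos (Set.Ici 0) 0
  /-- `f'(0⁺) = γ (f(0⁺) - f(0⁻))`, and for `γ = ∞`, `f(0⁺) = f(0⁻)`. -/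
  transmission : if γ = ⊤ then pos 0 = neg 0
    else derivWithin pos (Set.Ici 0) 0 = γ.toReal * (pos 0 - neg 0)

namespace DomGamma

variable {γ : ℝ≥0∞}

/-- Evaluation of an element of `𝒟^γ` as a function on `ℝ̈`. -/
def eval (f : DomGamma γ) (x : Rddot) : ℝ := if x.side then f.pos x.abs else f.neg x.abs

/-- The second derivative `f''` of `f ∈ 𝒟^γ` at a point of `ℝ̈` (one-sided at `0⁺`, `0⁻`). -/
def d2 (f : DomGamma γ) (x : Rddot) : ℝ :=
  if x.side then iteratedDerivWithin 2 f.pos (Set.Ici 0) x.abs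
  else iteratedDerivWithin 2 f.neg (Set.Ici 0) x.abs

end DomGamma

/-- The generator `L^γ f = (σ²/2) f''` on `𝒟^γ`. -/
def generator (γ : ℝ≥0∞) (σ2 : ℝ) (f : DomGamma γ) (x : Rddot) : ℝ := σ2 / 2 * f.d2 x

/-- `X` is a solution of the martingale problem associated with `L^γ` (with `σ² = σ2`):
a càdlàg `ℝ̈`-valued Markov process such that for every `f ∈ 𝒟^γ`,
`f(X_t) - ∫₀ᵗ L^γ f(X_s) ds` is a martingale for the filtration generated by `X`. -/
def SolvesMP {Ω : Type*} [MeasurableSpace Ω] (γ : ℝ≥0∞) (σ2 : ℝ) (P : Measure Ω)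
    (X : ℝ≥0 → Ω → Rddot) : Prop :=
  (∀ t, Measurable (X t)) ∧
  (∀ᵐ ω ∂P, CadlagOn fun t => X t ω) ∧
  IsMarkovProc P X ∧
  ∀ f : DomGamma γ, IsMartingaleNat P X
    (fun t ω => f.eval (X t ω) - ∫ s in (0:ℝ)..(t:ℝ), generator γ σ2 f (X s.toNNReal ω))

/-- The law of the path of a process, as a measure on the (Skorokhod) path space. -/
def pathLaw {Ω E : Type*} [MeasurableSpace Ω] [MeasurableSpace E] (P : Measure Ω)
    (X : ℝ≥0 → Ω → E) : Measure (ℝ≥0 → E) := P.map fun ω t => X t ω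

/-- `B` is a Brownian motion started from `x0` with variance parameter `σ2`:
continuous paths and independent, stationary Gaussian increments. -/
def IsBrownianMotion {Ω : Type*} [MeasurableSpace Ω] (P : Measure Ω) (B : ℝ≥0 → Ω → ℝ)
    (x0 : ℝ) (σ2 : ℝ≥0) : Prop :=
  (∀ t, Measurable (B t)) ∧
  (∀ᵐ ω ∂P, B 0 ω = x0) ∧
  (∀ᵐ ω ∂P, Continuous fun t => B t ω) ∧
  (∀ s t : ℝ≥0, s ≤ t →
    P.map (fun ω => B t ω - B s ω) = gaussianReal 0 (σ2 * (t - s))) ∧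
  ∀ (n : ℕ) (τ : Fin (n+1) → ℝ≥0), Monotone τ →
    iIndepFun
      (fun i : Fin n => fun ω => B (τ i.succ) ω - B (τ i.castSucc) ω) P

/-- Time spent by the path `g` strictly above level `c` in absolute value, up to time `u`. -/
def occAbove (c : ℝ) (g : ℝ≥0 → ℝ) (u : ℝ≥0) : ℝ :=
  ∫ s in (0:ℝ)..(u:ℝ), if c < |g s.toNNReal| then (1:ℝ) else 0

/-- Time spent by the path `g` at levels `≤ c` in absolute value, up to time `u`. -/
def occBelow (c : ℝ) (g : ℝ≥0 → ℝ) (u : ℝ≥0) : ℝ :=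
  ∫ s in (0:ℝ)..(u:ℝ), if |g s.toNNReal| ≤ c then (1:ℝ) else 0

/-- The time change `τ(t) = inf{u > 0 : ∫₀ᵘ 1_{|g_s| > c} ds > t}`. -/
def tauTC (c : ℝ) (g : ℝ≥0 → ℝ) (t : ℝ≥0) : ℝ≥0 := sInf {u : ℝ≥0 | (t:ℝ) < occAbove c g u}

/-- The time change `θ(t) = inf{u > 0 : ∫₀ᵘ 1_{|g_s| ≤ c} ds > t}`. -/
def thetaTC (c : ℝ) (g : ℝ≥0 → ℝ) (t : ℝ≥0) : ℝ≥0 := sInf {u : ℝ≥0 | (t:ℝ) < occBelow c g u}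

/-- The gluing map `r : ℝ → ℝ̈`: it maps `[1/(2γ),∞)` to `[0⁺,∞)` and `(-∞,-1/(2γ)]`
to `(-∞,0⁻]` by translation, `[0,1/(2γ))` to `0⁺` and `(-1/(2γ),0)` to `0⁻`. -/
def rmap (γ : ℝ) (z : ℝ) : Rddot :=
  if 0 ≤ z then ⟨true, (z - 1/(2*γ)).toNNReal⟩ else ⟨false, (-z - 1/(2*γ)).toNNReal⟩

/-- The right inverse `r⁻¹(x) = x + sign(x)/(2γ)` of `r`. -/
def rinv (γ : ℝ) (x : Rddot) : ℝ := x.val + (if x.side then 1/(2*γ) else -(1/(2*γ)))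

/-- The "speed and scale" construction: `X_t = r(B_{τ(t)})`. -/
def speedScale {Ω : Type*} (γ : ℝ) (B : ℝ≥0 → Ω → ℝ) (t : ℝ≥0) (ω : Ω) : Rddot :=
  rmap γ (B (tauTC (1/(2*γ)) (fun s => B s ω) t) ω)

/-- The Gaussian kernel `G_t(z) = (2πt)^{-1/2} exp(-z²/(2t))`. -/
def gaussK (t z : ℝ) : ℝ := (Real.sqrt (2 * Real.pi * t))⁻¹ * Real.exp (-(z^2) / (2*t))

/-- `∫₀^∞ e^{-2γl} G_t(a+b+l) dl`. -/
def barrierInt (γ t a b : ℝ) : ℝ :=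
  ∫ l in Set.Ioi (0:ℝ), Real.exp (-(2*γ*l)) * gaussK t (a + b + l)

/-- The transition density of partially reflected Brownian motion with permeability `γ`,
as a function of `t`, `a = |x|`, `b = |y|` and of whether `x` and `y` lie on the same
half-line. -/
def transDens (γ t a b : ℝ) (same : Bool) : ℝ :=
  if same then gaussK t (a - b) + gaussK t (a + b) - 2*γ*barrierInt γ t a b
  else 2*γ*barrierInt γ t a b

/-- `(1/(2ε)) ∫₀ᵗ 1_{|h_s| ≤ ε} ds`, the approximation of the local time at the origin. -/
def localTimeApprox (h : ℝ≥0 → ℝ) (t : ℝ≥0) (ε : ℝ) : ℝ := (1/(2*ε)) * occBelow ε h t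

/-- `L` is the local time at the origin of the path `h`:
`L_t = lim_{ε↓0} (1/(2ε)) ∫₀ᵗ 1_{|h_s| ≤ ε} ds`. -/
def IsLocalTimePath (h : ℝ≥0 → ℝ) (L : ℝ≥0 → ℝ) : Prop :=
  ∀ t : ℝ≥0, Filter.Tendsto (fun ε => localTimeApprox h t ε)
    (nhdsWithin 0 (Set.Ioi 0)) (nhds (L t))

/-- `μ` is the law (on path space) of the absolute value of a Brownian motion with
variance parameter `σ2` started from `a`, i.e. of reflected Brownian motion. -/
def ReflBMLaw (a : ℝ) (σ2 : ℝ≥0) (μ : Measure (ℝ≥0 → ℝ)) : Prop :=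
  ∃ (Ω' : Type) (m' : MeasurableSpace Ω') (P' : @Measure Ω' m') (B' : ℝ≥0 → Ω' → ℝ),
    @IsProbabilityMeasure Ω' m' P' ∧ @IsBrownianMotion Ω' m' P' B' a σ2 ∧
    μ = @Measure.map Ω' (ℝ≥0 → ℝ) m' _ (fun ω t => |B' t ω|) P'

/-- `μ` is the law (on path space) of a Brownian motion with variance parameter `σ2`
started from `a`. -/
def BMLaw (a : ℝ) (σ2 : ℝ≥0) (μ : Measure (ℝ≥0 → ℝ)) : Prop :=
  ∃ (Ω' : Type) (m' : MeasurableSpace Ω') (P' : @Measure Ω' m') (B' : ℝ≥0 → Ω' → ℝ),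
    @IsProbabilityMeasure Ω' m' P' ∧ @IsBrownianMotion Ω' m' P' B' a σ2 ∧
    μ = @Measure.map Ω' (ℝ≥0 → ℝ) m' _ (fun ω t => B' t ω) P'

/-- `W` is a reflected Brownian motion started from `a`: it is distributed as the
absolute value of a standard Brownian motion started from `a`. -/
def IsReflectedBM {Ω : Type*} [MeasurableSpace Ω] (P : Measure Ω) (W : ℝ≥0 → Ω → ℝ)
    (a : ℝ) : Prop :=
  (∀ t, Measurable (W t)) ∧ ReflBMLaw a 1 (P.map fun ω t => W t ω)

/-- `N` is a Poisson process with rate `r`. -/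
def IsPoissonProcess {Ω : Type*} [MeasurableSpace Ω] (P : Measure Ω) (N : ℝ≥0 → Ω → ℕ)
    (r : ℝ≥0) : Prop :=
  (∀ t, Measurable (N t)) ∧
  (∀ᵐ ω ∂P, N 0 ω = 0) ∧
  (∀ᵐ ω ∂P, Monotone fun t => N t ω) ∧
  (∀ s t : ℝ≥0, s ≤ t →
    P.map (fun ω => N t ω - N s ω) = poissonMeasure (r * (t - s))) ∧
  ∀ (n : ℕ) (τ : Fin (n+1) → ℝ≥0), Monotone τ →
    iIndepFun
      (fun i : Fin n => fun ω => N (τ i.succ) ω - N (τ i.castSucc) ω) P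


/-- The Skorokhod distance between `f` and `g` on the time interval `[0,T]`:
the infimum over increasing time changes `λ` of
`max(sup |λ(t) - t|, sup |f(λ(t)) - g(t)|)` (here expressed via a set of admissible `ε`). -/
def dskoT (T : ℝ) (f g : ℝ≥0 → ℝ) : ℝ :=
  sInf {ε : ℝ | 0 ≤ ε ∧ ∃ lam : ℝ → ℝ, StrictMonoOn lam (Set.Icc 0 T) ∧
    ContinuousOn lam (Set.Icc 0 T) ∧ lam 0 = 0 ∧ lam T = T ∧
    ∀ t ∈ Set.Icc 0 T, |lam t - t| ≤ ε ∧ |f (lam t).toNNReal - g t.toNNReal| ≤ ε}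

/-- The metric `d_sko(f,g) = ∫₀^∞ e^{-t} (d_sko^t(f,g) ∧ 1) dt` for Skorokhod
convergence on compact time intervals. -/
def dsko (f g : ℝ≥0 → ℝ) : ℝ :=
  ∫ T in Set.Ioi (0:ℝ), Real.exp (-T) * min (dskoT T f g) 1

/-- A set of paths is (sequentially) compact for the metric `d_sko`. -/
def DSkoSeqCompact (K : Set (ℝ≥0 → ℝ)) : Prop :=
  ∀ u : ℕ → (ℝ≥0 → ℝ), (∀ k, u k ∈ K) →
    ∃ (φ : ℕ → ℕ) (g : ℝ≥0 → ℝ), StrictMono φ ∧ g ∈ K ∧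
      Filter.Tendsto (fun k => dsko (u (φ k)) g) Filter.atTop (nhds 0)

/-- Convergence in distribution, in the Skorokhod space `(D(ℝ₊,ℝ), d_sko)`, of a sequence
of processes (each defined on its own probability space) to a limiting process:
expectations of bounded measurable functionals which are `d_sko`-continuous at càdlàg
paths converge. -/
def ConvDistSkoFam (Ω : ℕ → Type) (mΩ : ∀ n, MeasurableSpace (Ω n))
    (P : ∀ n, @Measure (Ω n) (mΩ n)) (Y : ∀ n, Ω n → (ℝ≥0 → ℝ))
    {Ω' : Type*} [MeasurableSpace Ω'] (P' : Measure Ω') (Y' : Ω' → (ℝ≥0 → ℝ)) : Prop :=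
  ∀ F : (ℝ≥0 → ℝ) → ℝ, Measurable F → (∃ C, ∀ h, |F h| ≤ C) →
    (∀ h, CadlagOn h → ∀ ε : ℝ, 0 < ε → ∃ δ : ℝ, 0 < δ ∧
      ∀ h', CadlagOn h' → dsko h h' < δ → |F h' - F h| < ε) →
    Filter.Tendsto (fun n => ∫ ω, F (Y n ω) ∂(P n)) Filter.atTop
      (nhds (∫ ω, F (Y' ω) ∂P'))

/-- Jump rates of the random walk with an obstacle of width `K`:
nearest-neighbour jumps at rate `m/2`, reduced to `c m/2` on the `K` central edges
(for odd `K` the site `0` is removed and `-1`, `+1` are adjacent). -/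
def rateGen (K : ℕ) (m c : ℝ) (i j : ℤ) : ℝ :=
  if K % 2 = 0 then
    (if (i - j).natAbs = 1 then (if (K : ℤ)/2 < max |i| |j| then m/2 else c*m/2) else 0)
  else
    (if i ≠ 0 ∧ j ≠ 0 ∧ ((i - j).natAbs = 1 ∨ (i = 1 ∧ j = -1) ∨ (i = -1 ∧ j = 1)) then
      (if ((K : ℤ)+1)/2 < max |i| |j| then m/2 else c*m/2) else 0)

/-- The generator of the random walk with an obstacle:
`Qf(i) = Σ_j q(i,j)(f(j) - f(i))`. -/
def QGen (K : ℕ) (m c : ℝ) (f : ℤ → ℝ) (i : ℤ) : ℝ :=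
  rateGen K m c i (i-1) * (f (i-1) - f i) + rateGen K m c i (i+1) * (f (i+1) - f i) +
    (if i = 1 ∨ i = -1 then rateGen K m c i (-i) * (f (-i) - f i) else 0)

/-- A path with values in a discrete space is a right-continuous step function with
left limits. -/
def StepPath {E : Type*} (f : ℝ≥0 → E) : Prop :=
  (∀ t : ℝ≥0, ∃ ε : ℝ≥0, 0 < ε ∧ ∀ s, t ≤ s → s < t + ε → f s = f t) ∧
  (∀ t : ℝ≥0, 0 < t → ∃ ε : ℝ≥0, 0 < ε ∧ ε ≤ t ∧
    ∀ s s', t - ε ≤ s → s < t → t - ε ≤ s' → s' < t → f s = f s')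

/-- `ξ` is the continuous-time random walk with an obstacle of width `K`, migration rate
`m`, barrier permeability parameter `c`, started from `x0`: a right-continuous jump
process on `ℤ` solving the martingale problem for the jump rates `rateGen K m c`. -/
def IsRWGen {Ω : Type*} [MeasurableSpace Ω] (K : ℕ) (m c : ℝ) (x0 : ℤ) (P : Measure Ω)
    (ξ : ℝ≥0 → Ω → ℤ) : Prop :=
  (∀ t, Measurable (ξ t)) ∧
  (∀ᵐ ω ∂P, ξ 0 ω = x0) ∧
  (∀ᵐ ω ∂P, StepPath fun t => ξ t ω) ∧
  (K % 2 = 1 → ∀ᵐ ω ∂P, ∀ t, ξ t ω ≠ 0) ∧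
  ∀ f : ℤ → ℝ, (∃ C, ∀ i, |f i| ≤ C) →
    IsMartingaleNat P ξ
      (fun t ω => f (ξ t ω) - ∫ s in (0:ℝ)..(t:ℝ), QGen K m c f (ξ s.toNNReal ω))

/-- The rescaled random walk `X_n(t) = ξ_n(nt)/√n`, as a real-valued path. -/
def rescaledRW {Ω : Type*} (n : ℕ) (ξ : ℝ≥0 → Ω → ℤ) (ω : Ω) : ℝ≥0 → ℝ :=
  fun t => (ξ ((n : ℝ≥0) * t) ω : ℝ) / Real.sqrt n

/-- The successive crossing times of the origin of a real-valued path: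
`T_0 = 0`, `T_{i+1} = inf{t > T_i : h(T_i) h(t) < 0}`. -/
def crossTimes (h : ℝ≥0 → ℝ) : ℕ → ℝ≥0
  | 0 => 0
  | i+1 => sInf {t : ℝ≥0 | crossTimes h i < t ∧ h (crossTimes h i) * h t < 0}

/-- The successive jump times of a step path, valued in `ℝ≥0∞` (`∞` if there are no
more jumps). -/
def jumpTimes (h : ℝ≥0 → ℝ) : ℕ → ℝ≥0∞
  | 0 => 0
  | k+1 => sInf ((fun s : ℝ≥0 => (s : ℝ≥0∞)) ''
      {s : ℝ≥0 | jumpTimes h k < (s : ℝ≥0∞) ∧ h s ≠ h (jumpTimes h k).toNNReal})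

/-- The martingale part `M(t) = |h(0)| + ∫₀ᵗ 1_{|h(s)| > c} d|h|(s)` of the rescaled
walk: the sum of the increments of `|h|` over jumps happening while `|h| > c`. -/
def martPart (c : ℝ) (h : ℝ≥0 → ℝ) (t : ℝ≥0) : ℝ :=
  |h 0| + ∑' k : ℕ,
    if jumpTimes h (k+1) ≤ (t : ℝ≥0∞) then
      (if c < |h ((jumpTimes h k).toNNReal)| then
        |h ((jumpTimes h (k+1)).toNNReal)| - |h ((jumpTimes h k).toNNReal)| else 0)
    else 0

/-- The occupation time of the barrier `[-c,c]` by the path `h` up to time `t`. -/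
def occBarrier (c : ℝ) (h : ℝ≥0 → ℝ) (t : ℝ≥0) : ℝ := occBelow c h t

/-- `μ` is the law on path space of (the projection to `ℝ` of) partially reflected
Brownian motion with permeability `γ` and diffusion coefficient `σ2` started from `x`. -/
def PRBMLawStart (γ : ℝ≥0∞) (σ2 : ℝ) (x : Rddot) (μ : Measure (ℝ≥0 → ℝ)) : Prop :=
  ∃ (Ω' : Type) (m' : MeasurableSpace Ω') (P' : @Measure Ω' m') (X : ℝ≥0 → Ω' → Rddot),
    @IsProbabilityMeasure Ω' m' P' ∧ @SolvesMP Ω' m' γ σ2 P' X ∧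
    (∀ᵐ ω ∂P', X 0 ω = x) ∧
    (∀ᵐ ω ∂P', Continuous fun t => (X t ω).val) ∧
    μ = @Measure.map Ω' (ℝ≥0 → ℝ) m' _ (fun ω t => (X t ω).val) P'


/-- The pair `(l,u)` is the two-sided regulator of `f` on `[a,b]` (on `ℝ₊`, extended by
`0` to negative times): `l`, `u` are continuous, non-decreasing, vanish at `0`,
`X(t) = f(t) + l(t) - u(t) ∈ [a,b]` for `t ≥ 0`, the Stieltjes measure `dl` does not
charge `{X > a}` and `du` does not charge `{X < b}`. -/
def TwoSidedRegulator (a b : ℝ) (f l u : ℝ → ℝ) : Prop :=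
  ∃ (hml : Monotone l) (hcl : Continuous l) (hmu : Monotone u) (hcu : Continuous u),
    (∀ t : ℝ, t ≤ 0 → l t = 0) ∧ (∀ t : ℝ, t ≤ 0 → u t = 0) ∧
    (∀ t : ℝ, 0 ≤ t → f t + l t - u t ∈ Set.Icc a b) ∧
    ({ toFun := l, mono' := hml,
       right_continuous' := fun _ => hcl.continuousAt.continuousWithinAt
       : StieltjesFunction ℝ }).measure {t : ℝ | 0 ≤ t ∧ a < f t + l t - u t} = 0 ∧
    ({ toFun := u, mono' := hmu,
       right_continuous' := fun _ => hcu.continuousAt.continuousWithinAt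
       : StieltjesFunction ℝ }).measure {t : ℝ | 0 ≤ t ∧ f t + l t - u t < b} = 0

/-!
Uniqueness: if `X₁ = f + l₁ - u₁` exceeded `X₂ = f + l₂ - u₂` at some time, then on the last
excursion of `X₁ - X₂` above `0` the path `X₁` stays above `a` and `X₂` below `b`, so `l₁` and
`u₂` are flat there and `X₁ - X₂` cannot have grown. Hence `X₁ = X₂`, and then the signed measure
`dl₁ - dl₂ = du₁ - du₂` is carried both by `{X = a}` and by `{X = b}`, so it vanishes.

Existence: cut `[0, ∞)` into cells on which `f` oscillates by at most `(b - a) / 2`. On each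
cell, starting from the state reached so far, apply the one-sided Skorokhod reflection at the
barrier nearer to that state; the oscillation bound keeps the path away from the other barrier.
Then `l` and `u` are the sums of the pushes at `a` and at `b`.
-/

/-- The Skorokhod regulator `sup_{r ∈ [s, t]} (-g r)⁺` of `g` started at time `s`, which keeps
`g + oneSidedReg g s` nonnegative after time `s`; for `t ≤ s` it is frozen at `(-g s)⁺`. -/
def oneSidedReg (g : ℝ → ℝ) (s t : ℝ) : ℝ :=
  sSup ((fun r => max 0 (-g r)) '' Icc s (max s t))

section OneSidedReg

variable {g : ℝ → ℝ} {s t p q r : ℝ}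

lemma bddAbove_oneSidedReg_image (hg : Continuous g) :
    BddAbove ((fun r => max 0 (-g r)) '' Icc s (max s t)) :=
  (isCompact_Icc.image (by fun_prop)).bddAbove

lemma le_oneSidedReg (hg : Continuous g) (hr : r ∈ Icc s (max s t)) :
    max 0 (-g r) ≤ oneSidedReg g s t :=
  le_csSup (bddAbove_oneSidedReg_image hg) (mem_image_of_mem _ hr)

lemma oneSidedReg_nonneg (hg : Continuous g) : 0 ≤ oneSidedReg g s t :=
  (le_max_left _ _).trans (le_oneSidedReg hg ⟨le_rfl, le_max_left s t⟩)

lemma neg_le_oneSidedReg (hg : Continuous g) (hst : s ≤ t) : -g t ≤ oneSidedReg g s t :=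
  (le_max_right _ _).trans (le_oneSidedReg hg ⟨hst, le_max_right s t⟩)

lemma oneSidedReg_of_le (hts : t ≤ s) (hg0 : 0 ≤ g s) : oneSidedReg g s t = 0 := by
  simp [oneSidedReg, max_eq_left hts, hg0]

lemma monotone_oneSidedReg (hg : Continuous g) : Monotone (oneSidedReg g s) := fun _ _ hpq =>
  csSup_le_csSup (bddAbove_oneSidedReg_image hg) ((nonempty_Icc.2 (le_max_left _ _)).image _) <|
    image_mono <| Icc_subset_Icc_right <| max_le_max le_rfl hpq

lemma continuous_oneSidedReg (hg : Continuous g) : Continuous (oneSidedReg g s) := by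
  have hseg : ∀ t, Icc s (max s t) = (fun θ : ℝ => s + θ * (max s t - s)) '' Icc 0 1 := by
    intro t
    rw [← segment_eq_Icc (le_max_left s t), segment_eq_image']
    rfl
  change Continuous fun t => sSup ((fun r => max 0 (-g r)) '' Icc s (max s t))
  simp_rw [hseg, image_image]
  exact isCompact_Icc.continuous_sSup (by fun_prop)

lemma exists_eq_oneSidedReg (hg : Continuous g) (s t : ℝ) :
    ∃ r ∈ Icc s (max s t), max 0 (-g r) = oneSidedReg g s t :=
  (isCompact_Icc.image (by fun_prop)).sSup_mem ((nonempty_Icc.2 (le_max_left _ _)).image _)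

lemma oneSidedReg_eq_of_pos (hg : Continuous g) (hpq : p ≤ q)
    (hpos : ∀ r ∈ Ioc p q, s ≤ r → 0 < g r + oneSidedReg g s r) :
    oneSidedReg g s p = oneSidedReg g s q := by
  obtain ⟨r, ⟨hsr, hrq⟩, hr⟩ := exists_eq_oneSidedReg hg s q
  refine le_antisymm (monotone_oneSidedReg hg hpq) ?_
  by_cases hrp : r ≤ max s p
  · exact hr ▸ le_oneSidedReg hg ⟨hsr, hrp⟩
  have hpr : p < r := (le_max_right s p).trans_lt (not_le.1 hrp)
  have hrq : r ≤ q := by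
    rcases le_total s q with hsq | hqs
    · rwa [max_eq_right hsq] at hrq
    · exact absurd ((max_eq_left hqs ▸ hrq).trans (le_max_left s p)) hrp
  rcases le_total (-g r) 0 with hgr | hgr
  · rw [← hr, max_eq_left hgr]
    exact oneSidedReg_nonneg hg
  · have hmono := monotone_oneSidedReg hg (s := s) hrq
    have := hpos r ⟨hpr, hrq⟩ hsr
    rw [← hr, max_eq_right hgr] at hmono
    linarith

lemma add_oneSidedReg_le (hg : Continuous g) (hst : s ≤ t) (hg0 : 0 ≤ g s) {ε : ℝ}
    (hosc : ∀ r ∈ Icc s t, g t - g r ≤ ε) : g t + oneSidedReg g s t ≤ g s + ε := by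
  obtain ⟨r, hr, hrt⟩ := exists_eq_oneSidedReg hg s t
  rw [max_eq_right hst] at hr
  have h1 := hosc r hr
  have h2 := hosc s ⟨le_rfl, hst⟩
  rw [← hrt]
  rcases le_total 0 (-g r) with h | h
  · rw [max_eq_right h]; linarith
  · rw [max_eq_left h]; linarith

end OneSidedReg

section VanishingSum

variable {φ : ℕ → ℝ → ℝ} {T : ℕ → ℝ}

lemma finsum_eq_sum_range_of_le (hT : Monotone T) (hφ : ∀ k, ∀ r ≤ T k, φ k r = 0) {n : ℕ}
    {r : ℝ} (hr : r ≤ T n) : ∑ᶠ k, φ k r = ∑ k ∈ Finset.range n, φ k r := by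
  refine finsum_eq_sum_of_support_subset _ fun k hk => ?_
  by_contra hkn
  exact hk (hφ k r (hr.trans (hT (not_lt.1 (by simpa using hkn)))))

lemma continuous_finsum_of_vanish (hT : Monotone T) (hT' : Tendsto T atTop atTop)
    (hφ : ∀ k, ∀ r ≤ T k, φ k r = 0) (hc : ∀ k, Continuous (φ k)) :
    Continuous fun r => ∑ᶠ k, φ k r := by
  refine continuous_finsum hc fun r => ?_
  obtain ⟨N, hN⟩ := (hT'.eventually_gt_atTop r).exists
  refine ⟨Iio (T N), Iio_mem_nhds hN, (Finset.range N).finite_toSet.subset ?_⟩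
  rintro k ⟨y, hyk, hyN⟩
  by_contra hkN
  exact hyk (hφ k y (hyN.out.le.trans (hT (not_lt.1 (by simpa using hkN)))))

lemma monotone_finsum_of_vanish (hT : Monotone T) (hT' : Tendsto T atTop atTop)
    (hφ : ∀ k, ∀ r ≤ T k, φ k r = 0) (hm : ∀ k, Monotone (φ k)) :
    Monotone fun r => ∑ᶠ k, φ k r := by
  intro p q hpq
  obtain ⟨N, hN⟩ := (hT'.eventually_ge_atTop q).exists
  simp only [finsum_eq_sum_range_of_le hT hφ hN, finsum_eq_sum_range_of_le hT hφ (hpq.trans hN)]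
  exact Finset.sum_le_sum fun k _ => hm k hpq

end VanishingSum

lemma exists_mem_Icc_of_tendsto {T : ℕ → ℝ} (hT' : Tendsto T atTop atTop) {r : ℝ}
    (hr : T 0 ≤ r) : ∃ n, r ∈ Icc (T n) (T (n + 1)) := by
  classical
  have hex : ∃ m, r < T m := (hT'.eventually_gt_atTop r).exists
  have hm0 : Nat.find hex ≠ 0 := fun h => (Nat.find_spec hex).not_ge (h ▸ hr)
  obtain ⟨n, hn⟩ := Nat.exists_eq_succ_of_ne_zero hm0
  exact ⟨n, not_lt.1 (Nat.find_min hex (hn ▸ n.lt_succ_self)), (hn ▸ Nat.find_spec hex).le⟩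

structure IsOscGrid (f : ℝ → ℝ) (ε : ℝ) (t : ℕ → ℝ) : Prop where
  zero : t 0 = 0
  mono : Monotone t
  tendsto : Tendsto t atTop atTop
  osc : ∀ k, ∀ r ∈ Icc (t k) (t (k + 1)), ∀ r' ∈ Icc (t k) (t (k + 1)), |f r - f r'| ≤ ε

lemma exists_oscGrid {f : ℝ → ℝ} (hf : Continuous f) {ε : ℝ} (hε : 0 < ε) :
    ∃ t, IsOscGrid f ε t := by
  have hη : ∀ n : ℕ, ∃ η > 0, η ≤ 1 ∧ ∀ r ∈ Icc 0 ((n : ℝ) + 1), ∀ r' ∈ Icc 0 ((n : ℝ) + 1),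
      |r - r'| ≤ η → |f r - f r'| ≤ ε := by
    intro n
    obtain ⟨η, hη, h⟩ := Metric.uniformContinuousOn_iff_le.1
      (isCompact_Icc.uniformContinuousOn_of_continuous hf.continuousOn) ε hε
    exact ⟨min η 1, by positivity, min_le_right _ _, fun r hr r' hr' hrr' =>
      h r hr r' hr' (hrr'.trans (min_le_left _ _))⟩
  choose η hη0 hη1 hηf using hη
  set t : ℕ → ℝ := fun k => (fun s => s + η ⌈s⌉₊)^[k] 0
  have ht_succ : ∀ k, t (k + 1) = t k + η ⌈t k⌉₊ := fun k => Function.iterate_succ_apply' _ _ _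
  have ht_mono : Monotone t :=
    monotone_nat_of_le_succ fun k => by rw [ht_succ]; linarith [hη0 ⌈t k⌉₊]
  refine ⟨t, ⟨rfl, ht_mono, tendsto_atTop_atTop_of_monotone ht_mono fun M => ?_,
    fun k r hr r' hr' => ?_⟩⟩
  · -- the steps `η ⌈t k⌉₊` are bounded below as long as `t k` stays below `M`
    by_contra! hM
    obtain ⟨j, -, hj⟩ := (Finset.range (⌈M⌉₊ + 1)).exists_min_image η ⟨0, by simp⟩
    have hlow : ∀ k : ℕ, k * η j ≤ t k := by
      intro k
      induction k with
      | zero => simp [t]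
      | succ k ih =>
        have : η j ≤ η ⌈t k⌉₊ :=
          hj _ (Finset.mem_range.2 (Nat.lt_succ_of_le (Nat.ceil_mono (hM k).le)))
        rw [ht_succ]
        push_cast
        linarith
    obtain ⟨k, hk⟩ := exists_nat_gt (M / η j)
    rw [div_lt_iff₀ (hη0 j)] at hk
    linarith [hlow k, hM k]
  · rw [ht_succ] at hr hr'
    have h0 : 0 ≤ t k := ht_mono (Nat.zero_le k)
    have hceil : t k + η ⌈t k⌉₊ ≤ ⌈t k⌉₊ + 1 := add_le_add (Nat.le_ceil _) (hη1 _)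
    refine hηf ⌈t k⌉₊ r ⟨h0.trans hr.1, hr.2.trans hceil⟩ r' ⟨h0.trans hr'.1, hr'.2.trans hceil⟩ ?_
    rw [abs_sub_le_iff]
    constructor <;> linarith [hr.1, hr.2, hr'.1, hr'.2]

lemma StieltjesFunction.measure_eq_zero_of_locally_flat (g : StieltjesFunction ℝ) {S : Set ℝ}
    (h : ∀ x ∈ S, ∃ p q, Icc p q ∈ 𝓝 x ∧ g p = g q) : g.measure S = 0 :=
  measure_null_of_locally_null S fun x hx => by
    obtain ⟨p, q, hx, hpq⟩ := h x hx
    refine ⟨Ioc p q, mem_nhdsWithin_of_mem_nhds ?_, by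
      rw [g.measure_Ioc, hpq, sub_self, ENNReal.ofReal_zero]⟩
    exact mem_of_superset (interior_Icc (a := p) ▸ interior_mem_nhds.2 hx) Ioo_subset_Ioc_self

lemma StieltjesFunction.eq_of_measure_Ioc_eq_zero (g : StieltjesFunction ℝ) {p q : ℝ}
    (h : g.measure (Ioc p q) = 0) (hpq : p ≤ q) : g q = g p := by
  rw [g.measure_Ioc, ENNReal.ofReal_eq_zero, sub_nonpos] at h
  exact le_antisymm h (g.mono hpq)

lemma StieltjesFunction.measure_le_of_add_eq {L₁ L₂ U₁ U₂ : StieltjesFunction ℝ}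
    (hsum : L₁ + U₂ = L₂ + U₁) {A E : Set ℝ} (hL₁ : L₁.measure A = 0)
    (hU₁ : U₁.measure (E \ A) = 0) : L₁.measure E ≤ L₂.measure E :=
  calc L₁.measure E ≤ L₁.measure (E ∩ A) + L₁.measure (E \ A) := measure_le_inter_add_sdiff _ _ _
    _ = L₁.measure (E \ A) := by rw [measure_mono_null inter_subset_right hL₁, zero_add]
    _ ≤ (L₁ + U₂).measure (E \ A) := by
      rw [StieltjesFunction.measure_add, Measure.add_apply]
      exact le_self_add
    _ = L₂.measure (E \ A) := by
      rw [hsum, StieltjesFunction.measure_add, Measure.add_apply, hU₁, add_zero]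
    _ ≤ L₂.measure E := measure_mono sdiff_subset

section Cell

variable (a b : ℝ) (f : ℝ → ℝ)

/-- On a cell started at time `s` in state `x`, the path is reflected at `a` if `x` lies in the
lower half of `[a, b]` and at `b` otherwise; `cellGap` is the distance to that barrier before
reflection. -/
def cellGap (s x r : ℝ) : ℝ :=
  if x ≤ (a + b) / 2 then x - a + (f r - f s) else b - x - (f r - f s)

def cellReg (s x : ℝ) : ℝ → ℝ := oneSidedReg (cellGap a b f s x) s

def cellPush (s x r : ℝ) : ℝ :=
  if x ≤ (a + b) / 2 then cellReg a b f s x r else -cellReg a b f s x r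

def cellPath (s x r : ℝ) : ℝ := x + (f r - f s) + cellPush a b f s x r

variable {a b f} {s s' x r : ℝ}

lemma cellGap_add_cellReg :
    cellGap a b f s x r + cellReg a b f s x r =
      if x ≤ (a + b) / 2 then cellPath a b f s x r - a else b - cellPath a b f s x r := by
  unfold cellPath cellPush cellGap
  split_ifs <;> ring

lemma continuous_cellGap (hf : Continuous f) : Continuous (cellGap a b f s x) := by
  unfold cellGap
  split_ifs <;> fun_prop

lemma cellGap_self_nonneg (hx : x ∈ Icc a b) : 0 ≤ cellGap a b f s x s := by
  unfold cellGap
  split_ifs <;> linarith [hx.1, hx.2]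

lemma cellPath_mem (hf : Continuous f) (hx : x ∈ Icc a b)
    (hosc : ∀ r ∈ Icc s s', ∀ r' ∈ Icc s s', |f r - f r'| ≤ (b - a) / 2) (hr : r ∈ Icc s s') :
    cellPath a b f s x r ∈ Icc a b := by
  have hg := continuous_cellGap (a := a) (b := b) (s := s) (x := x) hf
  have hlow : 0 ≤ cellGap a b f s x r + cellReg a b f s x r := by
    have := neg_le_oneSidedReg hg hr.1
    unfold cellReg
    linarith
  have hup : cellGap a b f s x r + cellReg a b f s x r ≤ b - a := by
    refine (add_oneSidedReg_le hg hr.1 (cellGap_self_nonneg hx) (ε := (b - a) / 2)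
      fun r' hr' => ?_).trans ?_
    · have := abs_le.1 (hosc r hr r' ⟨hr'.1, hr'.2.trans hr.2⟩)
      unfold cellGap
      split_ifs <;> linarith [this.1, this.2]
    · unfold cellGap
      split_ifs <;> linarith [hx.1, hx.2]
  rw [cellGap_add_cellReg] at hlow hup
  split_ifs at hlow hup <;> constructor <;> linarith

end Cell

section Grid

variable (a b : ℝ) (f : ℝ → ℝ) (t : ℕ → ℝ)

def regState : ℕ → ℝ
  | 0 => f (t 0)
  | k + 1 => cellPath a b f (t k) (regState k) (t (k + 1))

def cellPart (k : ℕ) (r : ℝ) : ℝ :=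
  cellReg a b f (t k) (regState a b f t k) (min r (t (k + 1)))

/-- `barrierReg true` (resp. `false`) sums the pushes of the cells reflected at `a` (resp. `b`). -/
def barrierReg (lower : Bool) (r : ℝ) : ℝ :=
  ∑ᶠ k, if decide (regState a b f t k ≤ (a + b) / 2) = lower then cellPart a b f t k r else 0

def regPath (r : ℝ) : ℝ := f r + barrierReg a b f t true r - barrierReg a b f t false r

variable {a b f t} {k n : ℕ} {p q r : ℝ}

lemma regState_mem (hf : Continuous f) (hf0 : f 0 ∈ Icc a b) (ht : IsOscGrid f ((b - a) / 2) t) :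
    ∀ k, regState a b f t k ∈ Icc a b
  | 0 => by simpa [regState, ht.zero] using hf0
  | k + 1 => cellPath_mem hf (regState_mem hf hf0 ht k) (ht.osc k) ⟨ht.mono k.le_succ, le_rfl⟩

lemma cellPart_of_le (hx : regState a b f t k ∈ Icc a b) (hr : r ≤ t k) :
    cellPart a b f t k r = 0 :=
  oneSidedReg_of_le ((min_le_left _ _).trans hr) (cellGap_self_nonneg hx)

lemma continuous_cellPart (hf : Continuous f) : Continuous (cellPart a b f t k) :=
  (continuous_oneSidedReg (continuous_cellGap hf)).comp (continuous_id.min continuous_const)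

lemma monotone_cellPart (hf : Continuous f) : Monotone (cellPart a b f t k) :=
  (monotone_oneSidedReg (continuous_cellGap hf)).comp fun _ _ h => min_le_min_right _ h

lemma barrierReg_part_of_le (hf : Continuous f) (hf0 : f 0 ∈ Icc a b)
    (ht : IsOscGrid f ((b - a) / 2) t) (lower : Bool) (k : ℕ) :
    ∀ r ≤ t k, (if decide (regState a b f t k ≤ (a + b) / 2) = lower then
      cellPart a b f t k r else 0) = 0 := fun r hr => by
  split_ifs
  exacts [cellPart_of_le (regState_mem hf hf0 ht k) hr, rfl]

lemma continuous_barrierReg (hf : Continuous f) (hf0 : f 0 ∈ Icc a b)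
    (ht : IsOscGrid f ((b - a) / 2) t) (lower : Bool) : Continuous (barrierReg a b f t lower) :=
  continuous_finsum_of_vanish ht.mono ht.tendsto (barrierReg_part_of_le hf hf0 ht lower)
    fun k => by split_ifs; exacts [continuous_cellPart hf, continuous_const]

lemma monotone_barrierReg (hf : Continuous f) (hf0 : f 0 ∈ Icc a b)
    (ht : IsOscGrid f ((b - a) / 2) t) (lower : Bool) : Monotone (barrierReg a b f t lower) :=
  monotone_finsum_of_vanish ht.mono ht.tendsto (barrierReg_part_of_le hf hf0 ht lower)
    fun k => by split_ifs; exacts [monotone_cellPart hf, monotone_const]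

lemma barrierReg_of_nonpos (hf : Continuous f) (hf0 : f 0 ∈ Icc a b)
    (ht : IsOscGrid f ((b - a) / 2) t) (lower : Bool) (hr : r ≤ 0) :
    barrierReg a b f t lower r = 0 := by
  rw [barrierReg, finsum_eq_sum_range_of_le ht.mono (barrierReg_part_of_le hf hf0 ht lower)
    (n := 0) (by rwa [ht.zero]), Finset.sum_range_zero]

lemma regState_eq_add_sum : ∀ n, regState a b f t n =
    f (t n) + ∑ k ∈ Finset.range n, cellPush a b f (t k) (regState a b f t k) (t (k + 1))
  | 0 => by simp [regState]
  | n + 1 => by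
    have := regState_eq_add_sum n
    rw [Finset.sum_range_succ, regState, cellPath]
    linarith

lemma regPath_eq_cellPath (hf : Continuous f) (hf0 : f 0 ∈ Icc a b)
    (ht : IsOscGrid f ((b - a) / 2) t) (hr : r ∈ Icc (t n) (t (n + 1))) :
    regPath a b f t r = cellPath a b f (t n) (regState a b f t n) r := by
  have hpart : ∀ k, (if decide (regState a b f t k ≤ (a + b) / 2) = true then
        cellPart a b f t k r else 0) -
      (if decide (regState a b f t k ≤ (a + b) / 2) = false then cellPart a b f t k r else 0) =
      cellPush a b f (t k) (regState a b f t k) (min r (t (k + 1))) := fun k => by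
    by_cases h : regState a b f t k ≤ (a + b) / 2 <;> simp [h, cellPush, cellPart]
  have hsum : ∀ k ∈ Finset.range n, cellPush a b f (t k) (regState a b f t k) (min r (t (k + 1)))
      = cellPush a b f (t k) (regState a b f t k) (t (k + 1)) := fun k hk => by
    rw [min_eq_right ((ht.mono (Finset.mem_range.1 hk)).trans hr.1)]
  rw [regPath, barrierReg, barrierReg,
    finsum_eq_sum_range_of_le ht.mono (barrierReg_part_of_le hf hf0 ht _) hr.2,
    finsum_eq_sum_range_of_le ht.mono (barrierReg_part_of_le hf hf0 ht _) hr.2, add_sub_assoc,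
    ← Finset.sum_sub_distrib, Finset.sum_congr rfl fun k _ => hpart k, Finset.sum_range_succ,
    Finset.sum_congr rfl hsum, min_eq_left hr.2, cellPath, regState_eq_add_sum n]
  ring

lemma cellPart_eq_of_pos (hf : Continuous f) (hf0 : f 0 ∈ Icc a b)
    (ht : IsOscGrid f ((b - a) / 2) t) (hpq : p ≤ q)
    (hpos : ∀ y ∈ Ioc p q, 0 ≤ y → 0 < if regState a b f t k ≤ (a + b) / 2 then
      regPath a b f t y - a else b - regPath a b f t y) :
    cellPart a b f t k p = cellPart a b f t k q := by
  refine oneSidedReg_eq_of_pos (continuous_cellGap hf) (min_le_min_right _ hpq) fun y hy hky => ?_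
  have hyk : y ≤ t (k + 1) := hy.2.trans (min_le_right _ _)
  have hpy : p < y := by
    rcases le_total p (t (k + 1)) with h | h
    · simpa [min_eq_left h] using hy.1
    · rw [min_eq_right h] at hy
      exact absurd hyk (not_le.2 hy.1)
  have h0 : 0 ≤ y := (ht.zero ▸ ht.mono (Nat.zero_le k)).trans hky
  have := hpos y ⟨hpy, hy.2.trans (min_le_left _ _)⟩ h0
  rwa [regPath_eq_cellPath hf hf0 ht ⟨hky, hyk⟩, ← cellGap_add_cellReg] at this

lemma barrierReg_true_eq (hf : Continuous f) (hf0 : f 0 ∈ Icc a b)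
    (ht : IsOscGrid f ((b - a) / 2) t) (hpq : p ≤ q)
    (h : ∀ y ∈ Ioc p q, 0 ≤ y → a < regPath a b f t y) :
    barrierReg a b f t true p = barrierReg a b f t true q :=
  finsum_congr fun k => by
    by_cases hk : regState a b f t k ≤ (a + b) / 2
    · simpa [hk] using cellPart_eq_of_pos hf hf0 ht hpq fun y hy h0 => by
        simpa [hk] using h y hy h0
    · simp [hk]

lemma barrierReg_false_eq (hf : Continuous f) (hf0 : f 0 ∈ Icc a b)
    (ht : IsOscGrid f ((b - a) / 2) t) (hpq : p ≤ q)
    (h : ∀ y ∈ Ioc p q, 0 ≤ y → regPath a b f t y < b) :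
    barrierReg a b f t false p = barrierReg a b f t false q :=
  finsum_congr fun k => by
    by_cases hk : regState a b f t k ≤ (a + b) / 2
    · simp [hk]
    · simpa [hk] using cellPart_eq_of_pos hf hf0 ht hpq fun y hy h0 => by
        simpa [hk] using h y hy h0

end Grid

namespace TwoSidedRegulator

variable {a b : ℝ} {f l₁ u₁ l₂ u₂ : ℝ → ℝ}

lemma congr {g l u : ℝ → ℝ} (hfg : EqOn f g (Ici 0))
    (h : TwoSidedRegulator a b f l u) : TwoSidedRegulator a b g l u := by
  obtain ⟨hml, hcl, hmu, hcu, hl0, hu0, hmem, hA, hB⟩ := h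
  have hset : ∀ P : ℝ → Prop, {t | 0 ≤ t ∧ P (f t + l t - u t)} =
      {t | 0 ≤ t ∧ P (g t + l t - u t)} := fun P =>
    Set.ext fun t => and_congr_right fun ht => by rw [hfg ht]
  refine ⟨hml, hcl, hmu, hcu, hl0, hu0, fun t ht => hfg ht ▸ hmem t ht, ?_, ?_⟩
  · rw [← hset (a < ·)]
    exact hA
  · rw [← hset (· < b)]
    exact hB

lemma sub_le_sub (h₁ : TwoSidedRegulator a b f l₁ u₁) (h₂ : TwoSidedRegulator a b f l₂ u₂)
    {t : ℝ} (ht : 0 ≤ t) : l₁ t - u₁ t ≤ l₂ t - u₂ t := by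
  obtain ⟨hml₁, hcl₁, hmu₁, hcu₁, hl₁0, hu₁0, hX₁, hA₁, -⟩ := h₁
  obtain ⟨hml₂, hcl₂, hmu₂, hcu₂, hl₂0, hu₂0, hX₂, -, hB₂⟩ := h₂
  by_contra! hlt
  set D : ℝ → ℝ := fun r => (l₁ r - u₁ r) - (l₂ r - u₂ r)
  have hDc : Continuous D := (hcl₁.sub hcu₁).sub (hcl₂.sub hcu₂)
  set Z := Icc 0 t ∩ {r | D r ≤ 0}
  have hZ : IsCompact Z := isCompact_Icc.inter_right (isClosed_le hDc continuous_const)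
  have h0Z : (0 : ℝ) ∈ Z := ⟨⟨le_rfl, ht⟩, by simp [D, hl₁0 0 le_rfl, hu₁0 0 le_rfl,
    hl₂0 0 le_rfl, hu₂0 0 le_rfl]⟩
  have hτ : sSup Z ∈ Z := hZ.sSup_mem ⟨0, h0Z⟩
  have hpos : ∀ r ∈ Ioc (sSup Z) t, 0 ≤ r ∧ 0 < D r := fun r hr =>
    ⟨hτ.1.1.trans hr.1.le, not_le.1 fun hr' =>
      (le_csSup hZ.bddAbove ⟨⟨hτ.1.1.trans hr.1.le, hr.2⟩, hr'⟩).not_gt hr.1⟩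
  have hA : Ioc (sSup Z) t ⊆ {r | 0 ≤ r ∧ a < f r + l₁ r - u₁ r} := fun r hr =>
    ⟨(hpos r hr).1, by linarith [(hpos r hr).2, (hX₂ r (hpos r hr).1).1]⟩
  have hB : Ioc (sSup Z) t ⊆ {r | 0 ≤ r ∧ f r + l₂ r - u₂ r < b} := fun r hr =>
    ⟨(hpos r hr).1, by linarith [(hpos r hr).2, (hX₁ r (hpos r hr).1).2]⟩
  have hl₁ : l₁ t = l₁ (sSup Z) :=
    StieltjesFunction.eq_of_measure_Ioc_eq_zero _ (measure_mono_null hA hA₁) hτ.1.2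
  have hu₂ : u₂ t = u₂ (sSup Z) :=
    StieltjesFunction.eq_of_measure_Ioc_eq_zero _ (measure_mono_null hB hB₂) hτ.1.2
  have hDτ : D (sSup Z) ≤ 0 := hτ.2
  linarith [hmu₁ hτ.1.2, hml₂ hτ.1.2]

lemma le_of_sub_eq (hab : a < b) (h₁ : TwoSidedRegulator a b f l₁ u₁)
    (h₂ : TwoSidedRegulator a b f l₂ u₂) (hsub : ∀ r, l₁ r - u₁ r = l₂ r - u₂ r) (t : ℝ) :
    l₁ t ≤ l₂ t := by
  obtain ⟨hml₁, hcl₁, hmu₁, hcu₁, hl₁0, -, -, hA₁, hB₁⟩ := h₁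
  obtain ⟨hml₂, hcl₂, hmu₂, hcu₂, hl₂0, -, -, -, -⟩ := h₂
  rcases le_total t 0 with ht | ht
  · rw [hl₁0 t ht, hl₂0 t ht]
  set L₁ : StieltjesFunction ℝ := ⟨l₁, hml₁, fun _ => hcl₁.continuousAt.continuousWithinAt⟩
  set L₂ : StieltjesFunction ℝ := ⟨l₂, hml₂, fun _ => hcl₂.continuousAt.continuousWithinAt⟩
  set U₁ : StieltjesFunction ℝ := ⟨u₁, hmu₁, fun _ => hcu₁.continuousAt.continuousWithinAt⟩
  set U₂ : StieltjesFunction ℝ := ⟨u₂, hmu₂, fun _ => hcu₂.continuousAt.continuousWithinAt⟩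
  have hsum : L₁ + U₂ = L₂ + U₁ := StieltjesFunction.ext fun r => by
    show l₁ r + u₂ r = l₂ r + u₁ r
    linarith [hsub r]
  have hB : Ioc 0 t \ {r | 0 ≤ r ∧ a < f r + l₁ r - u₁ r} ⊆
      {r | 0 ≤ r ∧ f r + l₁ r - u₁ r < b} := fun r ⟨hr, hrA⟩ =>
    ⟨hr.1.le, by linarith [not_lt.1 fun h => hrA ⟨hr.1.le, h⟩]⟩
  have := StieltjesFunction.measure_le_of_add_eq hsum hA₁ (measure_mono_null hB hB₁)
  rw [StieltjesFunction.measure_Ioc, StieltjesFunction.measure_Ioc,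
    ENNReal.ofReal_le_ofReal_iff (sub_nonneg.2 (hml₂ ht))] at this
  change l₁ t - l₁ 0 ≤ l₂ t - l₂ 0 at this
  linarith [hl₁0 0 le_rfl, hl₂0 0 le_rfl]

lemma unique (hab : a < b) (h₁ : TwoSidedRegulator a b f l₁ u₁)
    (h₂ : TwoSidedRegulator a b f l₂ u₂) : l₁ = l₂ ∧ u₁ = u₂ := by
  have hsub : ∀ r, l₁ r - u₁ r = l₂ r - u₂ r := fun r => by
    rcases le_total r 0 with hr | hr
    · obtain ⟨-, -, -, -, hl₁0, hu₁0, -⟩ := h₁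
      obtain ⟨-, -, -, -, hl₂0, hu₂0, -⟩ := h₂
      rw [hl₁0 r hr, hu₁0 r hr, hl₂0 r hr, hu₂0 r hr]
    · exact le_antisymm (h₁.sub_le_sub h₂ hr) (h₂.sub_le_sub h₁ hr)
  have hl : l₁ = l₂ := funext fun r => le_antisymm (le_of_sub_eq hab h₁ h₂ hsub r)
    (le_of_sub_eq hab h₂ h₁ (fun r => (hsub r).symm) r)
  exact ⟨hl, funext fun r => by linarith [hsub r, congrFun hl r]⟩

end TwoSidedRegulator

lemma exists_twoSidedRegulator_of_continuous {a b : ℝ} (hab : a < b) {f : ℝ → ℝ}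
    (hf : Continuous f) (hf0 : f 0 ∈ Icc a b) : ∃ l u, TwoSidedRegulator a b f l u := by
  obtain ⟨t, ht⟩ := exists_oscGrid hf (half_pos (sub_pos.2 hab))
  have hX : Continuous (regPath a b f t) :=
    (hf.add (continuous_barrierReg hf hf0 ht true)).sub (continuous_barrierReg hf hf0 ht false)
  refine ⟨barrierReg a b f t true, barrierReg a b f t false, monotone_barrierReg hf hf0 ht _,
    continuous_barrierReg hf hf0 ht _, monotone_barrierReg hf hf0 ht _,
    continuous_barrierReg hf hf0 ht _, fun r hr => barrierReg_of_nonpos hf hf0 ht _ hr,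
    fun r hr => barrierReg_of_nonpos hf hf0 ht _ hr, fun r hr => ?_,
    StieltjesFunction.measure_eq_zero_of_locally_flat _ fun x hx => ?_,
    StieltjesFunction.measure_eq_zero_of_locally_flat _ fun x hx => ?_⟩
  · obtain ⟨n, hn⟩ := exists_mem_Icc_of_tendsto ht.tendsto (ht.zero ▸ hr)
    change regPath a b f t r ∈ Icc a b
    rw [regPath_eq_cellPath hf hf0 ht hn]
    exact cellPath_mem hf (regState_mem hf hf0 ht n) (ht.osc n) hn
  · obtain ⟨p, q, hxpq, hpq, hsub⟩ :=
      exists_Icc_mem_subset_of_mem_nhds (hX.continuousAt.preimage_mem_nhds (Ioi_mem_nhds hx.2))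
    exact ⟨p, q, hpq, barrierReg_true_eq hf hf0 ht (hxpq.1.trans hxpq.2)
      fun y hy _ => hsub (Ioc_subset_Icc_self hy)⟩
  · obtain ⟨p, q, hxpq, hpq, hsub⟩ :=
      exists_Icc_mem_subset_of_mem_nhds (hX.continuousAt.preimage_mem_nhds (Iio_mem_nhds hx.2))
    exact ⟨p, q, hpq, barrierReg_false_eq hf hf0 ht (hxpq.1.trans hxpq.2)
      fun y hy _ => hsub (Ioc_subset_Icc_self hy)⟩

lemma exists_twoSidedRegulator {a b : ℝ} (hab : a < b) {f : ℝ → ℝ}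
    (hf : ContinuousOn f (Ici 0)) (hf0 : f 0 ∈ Icc a b) : ∃ l u, TwoSidedRegulator a b f l u := by
  have hg : Continuous fun t => f (max t 0) :=
    hf.comp_continuous (by fun_prop) fun t => le_max_right t 0
  obtain ⟨l, u, h⟩ := exists_twoSidedRegulator_of_continuous hab hg (by simpa using hf0)
  exact ⟨l, u, h.congr fun t ht => by simp [max_eq_left (show (0:ℝ) ≤ t from ht)]⟩

/-- **two-sided regulator.** Fix `a < b` and let `f : ℝ₊ → ℝ` be
continuous with `f(0) ∈ [a,b]`. There exists a unique pair `(l,u)` of continuous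
functions such that (i) `X(t) := f(t) + l(t) - u(t) ∈ [a,b]` for all `t ≥ 0`;
(ii) `l(0) = u(0) = 0`, `l` and `u` non-decreasing;
(iii) `∫₀^∞ 1_{X(t)>a} dl(t) = ∫₀^∞ 1_{X(t)<b} du(t) = 0`. -/
theorem two_sided_regulator (a b : ℝ) (hab : a < b) (f : ℝ → ℝ)
    (hf : ContinuousOn f (Set.Ici 0)) (hf0 : f 0 ∈ Set.Icc a b) :
    ∃! p : (ℝ → ℝ) × (ℝ → ℝ), TwoSidedRegulator a b f p.1 p.2 := by
  obtain ⟨l, u, h⟩ := exists_twoSidedRegulator hab hf hf0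
  refine ⟨(l, u), h, fun p hp => ?_⟩
  obtain ⟨hl, hu⟩ := hp.unique hab h
  exact Prod.ext hl hu
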